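/- Let S be as in situation (6) with scored closure S_c, and for α ∈ K^d and a face τ define E(S)_τ(α) := { λ ∈ Kτ/ℤ(A∩τ) : α − λ ∈ S + ℤ(A∩τ) }. Then: (1) E(S)_τ(α) is a finite set; (2) for τ = ℝ≥0A, E(S)_{ℝ≥0A}(α) = { α mod ℤ^d }; (3) for a facet σ, E(S)_σ(α) ≠ ∅ if and only if F_σ(α) ∈ F_σ(S) = F_σ(S_c). -/

import Mathlib

open Function

/-- Lattice `ℤ^d`. -/
abbrev Zd (d : ℕ) := Fin d → ℤ

noncomputable section

namespace SaitoTakahashi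

variable {d : ℕ}

/-- The affine semigroup `ℕA` generated by the finite set `A ⊆ ℤ^d`. -/
def NA (A : Finset (Zd d)) : AddSubmonoid (Zd d) := AddSubmonoid.closure (A : Set (Zd d))

/-- The group `ℤA` generated by `A`. -/
def ZA (A : Finset (Zd d)) : AddSubgroup (Zd d) := AddSubgroup.closure (A : Set (Zd d))

/-- Realification of a lattice point. -/
def toR (a : Zd d) : Fin d → ℝ := fun i => (a i : ℝ)

/-- The real cone `ℝ≥0 A`. -/
def coneOf (A : Finset (Zd d)) : Set (Fin d → ℝ) :=
  { x | ∃ c : Zd d → ℝ, (∀ a, 0 ≤ c a) ∧ x = ∑ a ∈ A, c a • toR a }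

/-- The cone `ℝ≥0 A` is strongly convex. -/
def StronglyConvex (A : Finset (Zd d)) : Prop :=
  ∀ x ∈ coneOf A, -x ∈ coneOf A → x = 0

/-- `B = A ∩ τ` for a face `τ` of the cone `ℝ≥0 A`, i.e. `B` is the subset of `A`
cut out by an integral supporting functional which is nonnegative on `A`. -/
def IsFace (A B : Finset (Zd d)) : Prop :=
  ∃ G : Zd d →+ ℤ, B ⊆ A ∧ (∀ a ∈ A, 0 ≤ G a) ∧ ∀ a ∈ A, (G a = 0 ↔ a ∈ B)

/-- `F` is the primitive integral support function of a facet of `ℝ≥0 A`: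
nonnegative on the cone, surjective onto `ℤ` (primitivity, using `ℤA = ℤ^d`),
and its zero set in the cone is a face of dimension `d - 1`. -/
def IsFacetFn (A : Finset (Zd d)) (F : Zd d →+ ℤ) : Prop :=
  (∀ a ∈ A, 0 ≤ F a) ∧ Surjective F ∧
    Module.finrank ℝ ↥(Submodule.span ℝ (toR '' {a : Zd d | a ∈ A ∧ F a = 0})) = d - 1

/-- The set `A ∩ σ` for the facet with primitive integral support function `F`. -/
def facetSet (A : Finset (Zd d)) (F : Zd d →+ ℤ) : Finset (Zd d) :=
  A.filter fun a => F a = 0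

/-- `S` is an `ℕA`-set: `S + ℕA ⊆ S`. -/
def IsNASet (A : Finset (Zd d)) (S : Set (Zd d)) : Prop :=
  ∀ s ∈ S, ∀ a ∈ NA A, s + a ∈ S

/-- `S` is a finitely generated `ℕA`-set. -/
def IsFGNASet (A : Finset (Zd d)) (S : Set (Zd d)) : Prop :=
  IsNASet A S ∧ ∃ G : Finset (Zd d), S = { x | ∃ g ∈ G, ∃ a ∈ NA A, x = g + a }

/-- `S` is scored: `S = ⋂_{σ facet} { a ∈ ℤ^d : F_σ(a) ∈ F_σ(S) }`. -/
def IsScored (A : Finset (Zd d)) (S : Set (Zd d)) : Prop :=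
  S = { x : Zd d | ∀ F : Zd d →+ ℤ, IsFacetFn A F → F x ∈ F '' S }

/-- `S + ℤ(A ∩ τ)` where `B = A ∩ τ`. -/
def plusZ (S : Set (Zd d)) (B : Finset (Zd d)) : Set (Zd d) :=
  { x | ∃ s ∈ S, ∃ z ∈ AddSubgroup.closure (B : Set (Zd d)), x = s + z }

/-- The coset `b + ℤ(A ∩ τ)` where `B = A ∩ τ`. -/
def coset (b : Zd d) (B : Finset (Zd d)) : Set (Zd d) :=
  { x | x - b ∈ AddSubgroup.closure (B : Set (Zd d)) }

/-- The standard-expression setting of the paper: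
`S = S_c \ ⋃ᵢ (bᵢ + ℤ(A∩τᵢ))`, where `S_c` is a finitely generated scored
`ℕA`-set (the scored closure of `S`), `bᵢ ∈ S_c`, the `τᵢ` are faces of `ℝ≥0 A`
(encoded by `Bf i = A ∩ τᵢ`), and `F_σ(S) = F_σ(S_c)` for every facet `σ`. -/
structure Setting (A : Finset (Zd d)) (Sc S : Set (Zd d)) {m : ℕ}
    (b : Fin m → Zd d) (Bf : Fin m → Finset (Zd d)) : Prop where
  latt : ZA A = ⊤
  convex : StronglyConvex A
  fg : IsFGNASet A Sc
  scored : IsScored A Sc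
  bIn : ∀ i, b i ∈ Sc
  face : ∀ i, IsFace A (Bf i)
  expr : S = Sc \ ⋃ i, coset (b i) (Bf i)
  sameF : ∀ F : Zd d →+ ℤ, IsFacetFn A F → F '' S = F '' Sc

/-- The expression `S = S_c \ ⋃ᵢ (bᵢ + ℤ(A∩τᵢ))` is irredundant. -/
def Irredundant (Sc S : Set (Zd d)) {m : ℕ}
    (b : Fin m → Zd d) (Bf : Fin m → Finset (Zd d)) : Prop :=
  ∀ i, Sc \ ⋃ j, ⋃ (_ : j ≠ i), coset (b j) (Bf j) ≠ S

section Kside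

variable (K : Type) [Field K]

/-- A lattice point as a point of `K^d`. -/
def toK (a : Zd d) : Fin d → K := fun i => (a i : K)

/-- The vanishing ideal `𝕀(V) ⊆ K[s₁,…,s_d]` of a subset `V ⊆ K^d`. -/
def vIdeal (V : Set (Fin d → K)) : Ideal (MvPolynomial (Fin d) K) :=
  ⨅ v ∈ V, RingHom.ker (MvPolynomial.eval v)

/-- `Ω_{S,S'}(a) = S \ (−a + S')`. -/
def Omega (S S' : Set (Zd d)) (a : Zd d) : Set (Zd d) := S \ { x | a + x ∈ S' }

/-- The `K`-algebra map `f(s) ↦ f(s − c)`. -/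
def shiftHom (c : Fin d → K) : MvPolynomial (Fin d) K →+* MvPolynomial (Fin d) K :=
  MvPolynomial.eval₂Hom MvPolynomial.C (fun i => MvPolynomial.X i - MvPolynomial.C (c i))

/-- The translate `I + c = { f(s − c) : f ∈ I }` of an ideal of `K[s]`. -/
def shiftIdeal (I : Ideal (MvPolynomial (Fin d) K)) (c : Fin d → K) :
    Ideal (MvPolynomial (Fin d) K) :=
  I.map (shiftHom K c)

/-- The `K`-span `Kτ` of a face, where `B = A ∩ τ`. -/
def spanK (B : Finset (Zd d)) : Submodule K (Fin d → K) :=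
  Submodule.span K (toK K '' (B : Set (Zd d)))

/-- `lam` is (a representative of) an element of `E(S)_τ(α)`:
`lam ∈ Kτ` and `α − lam ∈ S + ℤ(A∩τ)`, where `B = A ∩ τ`. -/
def memE (S : Set (Zd d)) (B : Finset (Zd d)) (α lam : Fin d → K) : Prop :=
  lam ∈ spanK K B ∧
    ∃ s ∈ S, ∃ z ∈ AddSubgroup.closure (B : Set (Zd d)), α - lam = toK K s + toK K z

/-- The `K`-linear extension of an integral linear form `F` to `K^d`. -/
def FK (F : Zd d →+ ℤ) (v : Fin d → K) : K :=
  ∑ i, ((F (Pi.single i 1) : ℤ) : K) * v i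

/-- The affine translate `α + Kτ ⊆ K^d`, where `B = A ∩ τ`. -/
def aff (α : Fin d → K) (B : Finset (Zd d)) : Set (Fin d → K) :=
  { x | ∃ lam ∈ spanK K B, x = α + lam }

end Kside

end SaitoTakahashi

namespace SaitoTakahashi

section Helpers
variable {d : ℕ}
variable (K : Type) [Field K]

/-- `toK` as an `AddMonoidHom`. -/
def toKhom : Zd d →+ (Fin d → K) where
  toFun := toK K
  map_zero' := by funext i; simp [toK]
  map_add' x y := by funext i; simp [toK]

@[simp] lemma toKhom_apply (a : Zd d) : toKhom K a = toK K a := rfl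

lemma toK_sub (x y : Zd d) : toK K (x - y) = toK K x - toK K y := by
  funext i; simp [toK]

/-- `FK` as a linear map. -/
def FKlin (F : Zd d →+ ℤ) : (Fin d → K) →ₗ[K] K where
  toFun := FK K F
  map_add' x y := by simp [FK, mul_add, Finset.sum_add_distrib]
  map_smul' c x := by simp [FK, Finset.mul_sum, mul_left_comm]

@[simp] lemma FKlin_apply (F : Zd d →+ ℤ) (v : Fin d → K) : FKlin K F v = FK K F v := rfl

lemma FK_toK (F : Zd d →+ ℤ) (c : Zd d) : FK K F (toK K c) = (F c : K) := by
  have hc : c = ∑ i, c i • Pi.single i 1 := by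
    funext j; simp [Pi.single_apply, Finset.sum_apply]
  calc FK K F (toK K c) = ∑ i, ((F (Pi.single i 1) : ℤ) : K) * ((c i : ℤ) : K) := rfl
    _ = ((∑ i, c i * F (Pi.single i 1) : ℤ) : K) := by push_cast; exact Finset.sum_congr rfl (fun i _ => mul_comm _ _)
    _ = (F c : K) := by
        congr 1
        conv_rhs => rw [hc, map_sum]
        simp only [map_zsmul, smul_eq_mul]

def toQ (a : Zd d) : Fin d → ℚ := fun i => (a i : ℚ)

lemma indep_transfer (K : Type) [Field K] [CharZero K] {ι : Type} [Fintype ι]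
    (w : ι → Zd d) (h : LinearIndependent ℝ (fun i => toR (w i))) :
    LinearIndependent K (fun i => toK K (w i)) := by
  classical
  -- Step 1: rational independence
  have hQ : ∀ g : ι → ℚ, ∑ i, g i • toQ (w i) = 0 → ∀ i, g i = 0 := by
    intro g hg i
    have hR : ∑ i, ((g i : ℝ)) • toR (w i) = 0 := by
      funext j
      have hj := congrFun hg j
      simp only [Finset.sum_apply, Pi.smul_apply, smul_eq_mul, Pi.zero_apply, toQ] at hj
      have : ((∑ i, g i * ((w i j : ℤ) : ℚ) : ℚ) : ℝ) = 0 := by rw [hj]; norm_num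
      push_cast at this
      simpa [Finset.sum_apply, toR] using this
    have := Fintype.linearIndependent_iff.mp h _ hR i
    exact_mod_cast this
  -- Step 2: left inverse over ℚ
  let f : (ι → ℚ) →ₗ[ℚ] (Fin d → ℚ) :=
    { toFun := fun g => ∑ i, g i • toQ (w i)
      map_add' := by intro x y; simp [add_smul, Finset.sum_add_distrib]
      map_smul' := by intro c x; simp [Finset.smul_sum, smul_smul]
      }
  have hker : LinearMap.ker f = ⊥ := by
    rw [LinearMap.ker_eq_bot']
    intro m hm
    funext i
    exact hQ m hm i
  obtain ⟨L, hL⟩ := f.exists_leftInverse_of_injective hker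
  set c : ι → Fin d → ℚ := fun i j => L (Pi.single j 1) i with hc
  have key : ∀ i' i : ι, ∑ j, c i j * toQ (w i') j = (Pi.single i' (1 : ℚ) : ι → ℚ) i := by
    intro i' i
    have hf : f (Pi.single i' (1 : ℚ) : ι → ℚ) = toQ (w i') := by
      have : f (Pi.single i' (1 : ℚ) : ι → ℚ)
          = ∑ i, (Pi.single i' (1 : ℚ) : ι → ℚ) i • toQ (w i) := rfl
      rw [this, Finset.sum_eq_single i']
      · simp
      · intro b _ hb; rw [Pi.single_eq_of_ne hb]; simp
      · intro hmem; exact absurd (Finset.mem_univ i') hmem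
    have h1 : L (toQ (w i')) = (Pi.single i' (1 : ℚ) : ι → ℚ) := by
      rw [← hf]
      exact LinearMap.congr_fun hL (Pi.single i' (1 : ℚ) : ι → ℚ)
    have h2 : ∀ x : Fin d → ℚ, L x i = ∑ j, x j * c i j := by
      intro x
      have hx : x = ∑ j, x j • (Pi.single j (1 : ℚ) : Fin d → ℚ) := by
        funext j'
        simp [Pi.single_apply, Finset.sum_apply]
      conv_lhs => rw [hx, map_sum]
      simp only [map_smul, Finset.sum_apply, Pi.smul_apply, smul_eq_mul]
      rfl
    rw [← h1, h2 (toQ (w i'))]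
    exact Finset.sum_congr rfl fun j _ => mul_comm _ _
  -- Step 3: independence over K
  rw [Fintype.linearIndependent_iff]
  intro g hg i₀
  have comp : ∀ j, ∑ i, g i * ((w i j : ℤ) : K) = 0 := by
    intro j
    have := congrFun hg j
    simpa [Finset.sum_apply, toK] using this
  have main : ∀ i, (((Pi.single i (1 : ℚ) : ι → ℚ) i₀ : ℚ) : K)
      = ∑ j, ((c i₀ j : ℚ) : K) * ((w i j : ℤ) : K) := by
    intro i
    rw [← key i i₀]
    push_cast [toQ]
    rfl
  have step : g i₀ = ∑ i, g i * (((Pi.single i (1 : ℚ) : ι → ℚ) i₀ : ℚ) : K) := by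
    rw [Finset.sum_eq_single i₀]
    · simp
    · intro b _ hb
      rw [Pi.single_eq_of_ne (Ne.symm hb)]
      simp
    · intro hmem; exact absurd (Finset.mem_univ i₀) hmem
  rw [step]
  calc ∑ i, g i * (((Pi.single i (1 : ℚ) : ι → ℚ) i₀ : ℚ) : K)
      = ∑ i, ∑ j, ((c i₀ j : ℚ) : K) * (g i * ((w i j : ℤ) : K)) := by
        refine Finset.sum_congr rfl fun i _ => ?_
        rw [main i, Finset.mul_sum]
        exact Finset.sum_congr rfl fun j _ => by ring
    _ = ∑ j, ((c i₀ j : ℚ) : K) * ∑ i, g i * ((w i j : ℤ) : K) := by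
        rw [Finset.sum_comm]
        exact Finset.sum_congr rfl fun j _ => by rw [Finset.mul_sum]
    _ = 0 := by simp [comp]

lemma mem_closure_hom_zero {B : Finset (Zd d)} (G : Zd d →+ ℤ)
    (hG : ∀ b ∈ B, G b = 0) {z : Zd d}
    (hz : z ∈ AddSubgroup.closure (B : Set (Zd d))) : G z = 0 := by
  have : AddSubgroup.closure (B : Set (Zd d)) ≤ G.ker := by
    rw [AddSubgroup.closure_le]
    intro b hb
    exact hG b hb
  exact this hz

lemma spanK_le_kerFK {B : Finset (Zd d)} (F : Zd d →+ ℤ)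
    (hF : ∀ b ∈ B, F b = 0) : spanK K B ≤ LinearMap.ker (FKlin K F) := by
  rw [spanK, Submodule.span_le]
  rintro - ⟨b, hb, rfl⟩
  simp only [SetLike.mem_coe, LinearMap.mem_ker, FKlin_apply, FK_toK, hF b hb, Int.cast_zero]

lemma toK_mem_spanK {B : Finset (Zd d)} {z : Zd d}
    (hz : z ∈ AddSubgroup.closure (B : Set (Zd d))) : toK K z ∈ spanK K B := by
  have : AddSubgroup.closure (B : Set (Zd d))
      ≤ (spanK K B).toAddSubgroup.comap (toKhom K) := by
    rw [AddSubgroup.closure_le]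
    intro b hb
    exact Submodule.subset_span ⟨b, hb, rfl⟩
  exact this hz

lemma exists_nat_rep {A : Finset (Zd d)} {x : Zd d}
    (hx : x ∈ AddSubmonoid.closure (A : Set (Zd d))) :
    ∃ n : Zd d → ℕ, x = ∑ a ∈ A, n a • a := by
  classical
  induction hx using AddSubmonoid.closure_induction with
  | mem b hb =>
      refine ⟨fun a => if a = b then 1 else 0, ?_⟩
      rw [Finset.sum_eq_single b]
      · simp
      · intro a _ ha; simp [ha]
      · intro h; exact absurd hb h
  | zero => exact ⟨0, by simp⟩
  | add x y hx hy ihx ihy =>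
      obtain ⟨n, rfl⟩ := ihx
      obtain ⟨m, rfl⟩ := ihy
      refine ⟨n + m, ?_⟩
      rw [← Finset.sum_add_distrib]
      exact Finset.sum_congr rfl (fun a _ => by rw [Pi.add_apply, add_smul])

lemma spanK_top {A : Finset (Zd d)}
    (h : AddSubgroup.closure (A : Set (Zd d)) = ⊤) : spanK K A = ⊤ := by
  classical
  rw [eq_top_iff]
  intro v _
  have hsingle : ∀ i : Fin d, toK K (Pi.single i 1) ∈ spanK K A := by
    intro i
    exact toK_mem_spanK K (by rw [h]; trivial)
  have hv : v = ∑ i, v i • toK K (Pi.single i 1) := by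
    funext j
    simp [toK, Pi.single_apply, Finset.sum_apply]
  rw [hv]
  exact Submodule.sum_mem _ fun i _ => Submodule.smul_mem _ _ (hsingle i)

lemma spanK_facet_eq_ker [CharZero K] {A : Finset (Zd d)} {F : Zd d →+ ℤ}
    (hF : IsFacetFn A F) : spanK K (facetSet A F) = LinearMap.ker (FKlin K F) := by
  classical
  obtain ⟨-, hsurj, hrank⟩ := hF
  -- The kernel has dimension d - 1
  have hFK1 : ∃ x : Zd d, FKlin K F (toK K x) = 1 := by
    obtain ⟨x, hx⟩ := hsurj 1
    exact ⟨x, by simp [FK_toK, hx]⟩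
  have hrange : LinearMap.range (FKlin K F) = ⊤ := by
    obtain ⟨x, hx⟩ := hFK1
    rw [eq_top_iff]
    intro cc _
    have : FKlin K F (cc • toK K x) = cc := by rw [map_smul, hx, smul_eq_mul, mul_one]
    exact ⟨cc • toK K x, this⟩
  have hkerrank : Module.finrank K ↥(LinearMap.ker (FKlin K F)) = d - 1 := by
    have h1 := (FKlin K F).finrank_range_add_finrank_ker
    rw [hrange] at h1
    simp only [finrank_top, Module.finrank_self, Module.finrank_pi, Fintype.card_fin] at h1
    omega
  -- The span has dimension at least d - 1
  set E : Set (Zd d) := {a : Zd d | a ∈ A ∧ F a = 0} with hE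
  have hEfin : E.Finite := (A : Set (Zd d)).toFinite.subset (fun a ha => ha.1)
  obtain ⟨b, hbsub, hbspan, hbind⟩ := exists_linearIndependent ℝ (toR '' E)
  have hbfin : b.Finite := (hEfin.image toR).subset hbsub
  have hbfint : Fintype ↑b := hbfin.fintype
  have hbcard : b.toFinset.card = d - 1 := by
    rw [← finrank_span_set_eq_card hbind, hbspan, hrank]
  -- choose integer preimages
  choose wfn hwE hwR using fun x : ↑b => (hbsub x.2 : _)
  have hindR : LinearIndependent ℝ (fun x : ↑b => toR (wfn x)) := by
    have hfun : (fun x : ↑b => toR (wfn x)) = fun x : ↑b => (x : Fin d → ℝ) := funext hwR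
    rw [hfun]; exact hbind
  have hindK : LinearIndependent K (fun x : ↑b => toK K (wfn x)) :=
    indep_transfer K wfn hindR
  have hsub2 : Set.range (fun x : ↑b => toK K (wfn x)) ⊆ toK K '' (facetSet A F : Set (Zd d)) := by
    rintro - ⟨x, rfl⟩
    refine ⟨wfn x, ?_, rfl⟩
    have := hwE x
    simp only [facetSet, Finset.coe_filter, Set.mem_setOf_eq]
    exact ⟨this.1, this.2⟩
  have hspanrank : d - 1 ≤ Module.finrank K ↥(spanK K (facetSet A F)) := by
    have h1 : Module.finrank K ↥(Submodule.span K (Set.range fun x : ↑b => toK K (wfn x)))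
        = Fintype.card ↑b := finrank_span_eq_card hindK
    have h2 : Submodule.span K (Set.range fun x : ↑b => toK K (wfn x))
        ≤ spanK K (facetSet A F) := by
      rw [Submodule.span_le]
      exact hsub2.trans Submodule.subset_span
    have h3 := Submodule.finrank_mono h2 (M := Fin d → K)
    rw [h1] at h3
    rwa [← hbcard, Set.toFinset_card]
  have hle : spanK K (facetSet A F) ≤ LinearMap.ker (FKlin K F) := by
    refine spanK_le_kerFK K F ?_
    intro a ha
    exact (Finset.mem_filter.mp ha).2
  exact Submodule.eq_of_le_of_finrank_le hle (by rw [hkerrank]; exact hspanrank)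

end Helpers

/-- Lemma 4.5. Properties of the sets
`E(S)_τ(α) = { λ ∈ Kτ/ℤ(A∩τ) : α − λ ∈ S + ℤ(A∩τ) }`:
(1) `E(S)_τ(α)` is finite (finitely many classes mod `ℤ(A∩τ)`);
(2) `E(S)_{ℝ≥0A}(α) = {α mod ℤ^d}`;
(3) for a facet `σ`, `E(S)_σ(α) ≠ ∅` iff `F_σ(α) ∈ F_σ(S)`. -/
theorem E_set_properties {d m : ℕ}
    (K : Type) [Field K] [IsAlgClosed K] [CharZero K]
    (A : Finset (Zd d)) (Sc S : Set (Zd d))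
    (b : Fin m → Zd d) (Bf : Fin m → Finset (Zd d))
    (hset : Setting A Sc S b Bf) (hSne : S.Nonempty)
    (α : Fin d → K) :
    (∀ Bτ : Finset (Zd d), IsFace A Bτ →
      ∃ Λ : Set (Fin d → K), Λ.Finite ∧
        ∀ lam, memE K S Bτ α lam →
          ∃ μ ∈ Λ, ∃ z ∈ AddSubgroup.closure ((Bτ : Set (Zd d))), lam - μ = toK K z) ∧
    (∀ lam : Fin d → K, memE K S A α lam ↔ ∃ c : Zd d, α - lam = toK K c) ∧
    (∀ F : Zd d →+ ℤ, IsFacetFn A F →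
      ((∃ lam, memE K S (facetSet A F) α lam) ↔ ∃ s ∈ S, FK K F α = (F s : K))) := by
  classical
  obtain ⟨hNAset, GG, hScEq⟩ := hset.fg
  have hSsub : S ⊆ Sc := by rw [hset.expr]; exact Set.diff_subset
  refine ⟨?_, ?_, ?_⟩
  · -- Part 1: finiteness
    intro Bτ hface
    obtain ⟨G, hBA, hGpos, hGzero⟩ := hface
    have hGB : ∀ b ∈ Bτ, G b = 0 := fun b hb => (hGzero b (hBA hb)).mpr hb
    set N : ℕ := GG.sup (fun g =>
      if h : ∃ k : ℕ, FK K G α = ((G g : ℤ) : K) + (k : K) then h.choose else 0) with hN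
    set f : {g // g ∈ GG} × ({a // a ∈ A} → Fin (N+1)) → (Fin d → K) :=
      fun p => α - toK K (p.1.1 + ∑ b ∈ A.attach,
        (if b.1 ∈ Bτ then 0 else (p.2 b : ℕ)) • b.1) with hf
    refine ⟨Set.range f, Set.finite_range f, ?_⟩
    rintro lam ⟨hlspan, s, hsS, z, hz, heq⟩
    have hsSc : s ∈ Sc := hSsub hsS
    rw [hScEq] at hsSc
    obtain ⟨g, hg, a, haNA, rfl⟩ := hsSc
    obtain ⟨n, hna⟩ := exists_nat_rep haNA
    have hFKlam : FKlin K G lam = 0 := spanK_le_kerFK K G hGB hlspan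
    have hGz : G z = 0 := mem_closure_hom_zero G hGB hz
    have hα : α = lam + (toK K (g + a) + toK K z) := by rw [← heq]; abel
    have hFKα : FK K G α = ((G (g + a) : ℤ) : K) := by
      have : FKlin K G α = FKlin K G lam
          + (FKlin K G (toK K (g + a)) + FKlin K G (toK K z)) := by
        conv_lhs => rw [hα]
        rw [map_add, map_add]
      simpa [hFKlam, FK_toK, hGz] using this
    have hGa : G a = ∑ b ∈ A, (n b : ℤ) * G b := by
      rw [hna, map_sum]
      exact Finset.sum_congr rfl fun b _ => by rw [map_nsmul, nsmul_eq_mul]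
    have hGa_nonneg : 0 ≤ G a := by
      rw [hGa]
      exact Finset.sum_nonneg fun b hb =>
        mul_nonneg (Int.natCast_nonneg _) (hGpos b hb)
    set k₀ := (G a).toNat with hk₀def
    have hk₀ : (G a) = (k₀ : ℤ) := (Int.toNat_of_nonneg hGa_nonneg).symm
    have hex : ∃ k : ℕ, FK K G α = ((G g : ℤ) : K) + (k : K) := by
      refine ⟨k₀, ?_⟩
      rw [hFKα, map_add, hk₀]
      push_cast
      ring
    have hchoice : hex.choose = k₀ := by
      have e : ((G g : ℤ) : K) + (hex.choose : K) = ((G g : ℤ) : K) + (k₀ : K) := by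
        rw [← hex.choose_spec, hFKα, map_add, hk₀]
        push_cast
        ring
      have e2 := add_left_cancel e
      exact_mod_cast e2
    have hval : (if h : ∃ k : ℕ, FK K G α = ((G g : ℤ) : K) + (k : K)
        then h.choose else 0) = k₀ := by
      rw [dif_pos hex]
      exact hchoice
    have hk₀N : k₀ ≤ N := by
      rw [hN, ← hval]
      exact Finset.le_sup (f := fun g => if h : ∃ k : ℕ, FK K G α = ((G g : ℤ) : K) + (k : K)
        then h.choose else 0) hg
    have hnb : ∀ b ∈ A, b ∉ Bτ → n b ≤ N := by
      intro b hb hbB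
      have hGb0 : G b ≠ 0 := fun h => hbB ((hGzero b hb).mp h)
      have hGb1 : 1 ≤ G b := by have := hGpos b hb; omega
      have hterm : (n b : ℤ) ≤ (n b : ℤ) * G b := by
        nlinarith [Int.natCast_nonneg (n b)]
      have hsum : (n b : ℤ) * G b ≤ G a := by
        rw [hGa]
        exact Finset.single_le_sum (f := fun b => (n b : ℤ) * G b)
          (fun b hb => mul_nonneg (Int.natCast_nonneg _) (hGpos b hb)) hb
      omega
    set np : {a // a ∈ A} → Fin (N+1) := fun b => ⟨min (n b.1) N, by omega⟩ with hnp
    set w : Zd d := ∑ b ∈ A.attach,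
      (if b.1 ∈ Bτ then 0 else min (n b.1) N) • b.1 with hw
    have haw : a - w ∈ AddSubgroup.closure (Bτ : Set (Zd d)) := by
      have ha' : a = ∑ b ∈ A.attach, n b.1 • b.1 := by
        rw [hna, ← Finset.sum_attach A (fun b => n b • b)]
      rw [ha', hw, ← Finset.sum_sub_distrib]
      refine AddSubgroup.sum_mem _ ?_
      intro b _
      by_cases hbB : b.1 ∈ Bτ
      · rw [if_pos hbB, zero_smul, sub_zero]
        exact AddSubgroup.nsmul_mem _ (AddSubgroup.subset_closure hbB) _
      · rw [if_neg hbB, min_eq_left (hnb b.1 b.2 hbB), sub_self]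
        exact zero_mem _
    refine ⟨f (⟨g, hg⟩, np), ⟨(⟨g, hg⟩, np), rfl⟩, w - a - z, ?_, ?_⟩
    · have hrw : w - a - z = -(a - w) - z := by abel
      rw [hrw]
      exact AddSubgroup.sub_mem _ (AddSubgroup.neg_mem _ haw) hz
    · have hμ : f (⟨g, hg⟩, np) = α - toK K (g + w) := rfl
      have hlam : lam = α - (toK K (g + a) + toK K z) := by rw [← heq]; abel
      rw [hμ, hlam]
      have e1 : toK K (g + a) = toK K g + toK K a := map_add (toKhom K) g a
      have e2 : toK K (g + w) = toK K g + toK K w := map_add (toKhom K) g w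
      have e3 : toK K (w - a - z) = toK K w - toK K a - toK K z := by
        rw [toK_sub, toK_sub]
      rw [e1, e2, e3]
      abel
  · -- Part 2: the full cone
    intro lam
    have htop : AddSubgroup.closure ((A : Finset (Zd d)) : Set (Zd d)) = ⊤ := hset.latt
    constructor
    · rintro ⟨-, s, hsS, z, hz, heq⟩
      refine ⟨s + z, ?_⟩
      rw [heq]
      exact (map_add (toKhom K) s z).symm
    · rintro ⟨c, hc⟩
      obtain ⟨s, hsS⟩ := hSne
      have hmem : c - s ∈ AddSubgroup.closure ((A : Finset (Zd d)) : Set (Zd d)) := by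
        rw [htop]; exact AddSubgroup.mem_top _
      have hspan : lam ∈ spanK K A := by
        rw [spanK_top K htop]; exact Submodule.mem_top
      refine ⟨hspan, s, hsS, c - s, hmem, ?_⟩
      rw [hc]
      funext i
      show (c i : K) = (s i : K) + ((c - s) i : K)
      have : (c - s) i = c i - s i := rfl
      rw [this]
      push_cast
      ring
  · -- Part 3: facets
    intro F hFfacet
    have hker := spanK_facet_eq_ker K hFfacet
    have hfz : ∀ b ∈ facetSet A F, F b = 0 := fun b hb => (Finset.mem_filter.mp hb).2
    constructor
    · rintro ⟨lam, hlspan, s, hsS, z, hz, heq⟩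
      refine ⟨s, hsS, ?_⟩
      have h1 : FKlin K F lam = 0 := spanK_le_kerFK K F hfz hlspan
      have h2 : F z = 0 := mem_closure_hom_zero F hfz hz
      have hα : α = lam + (toK K s + toK K z) := by rw [← heq]; abel
      have : FKlin K F α = FKlin K F lam + (FKlin K F (toK K s) + FKlin K F (toK K z)) := by
        conv_lhs => rw [hα]
        rw [map_add, map_add]
      simpa [h1, FK_toK, h2] using this
    · rintro ⟨s, hsS, hFs⟩
      refine ⟨α - toK K s, ?_, s, hsS, 0, zero_mem _, ?_⟩
      · rw [hker]
        rw [LinearMap.mem_ker, map_sub]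
        simp [FK_toK, hFs]
      · have h0 : toK K (0 : Zd d) = 0 := map_zero (toKhom K)
        rw [h0, add_zero]
        abel


end SaitoTakahashi
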